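/- Let B be a generalized Bayesian network. Then for any cutset C of B, the Markov chain semantics, the limit average semantics, and the limit semantics induce the same set of full joint distributions: [B]_{MC-C} = [B]_{LimAvg-C} = [B]_{Lim-C}. -/

import Mathlib

open Filter
open scoped Classical

noncomputable section

namespace GBNPaper

variable {V : Type} [Fintype V] [DecidableEq V]

/-- A distribution over a finite type: nonnegative values summing to one. -/
def IsDist {α : Type} [Fintype α] (μ : α → ℝ) : Prop :=
  (∀ a, 0 ≤ μ a) ∧ ∑ a, μ a = 1

/-- The set of parents of a node `X` w.r.t. an edge set `E`. -/
def Pre (E : Finset (V × V)) (X : V) : Finset V :=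
  (E.filter fun e => e.2 = X).image Prod.fst

/-- The set of initial (parentless) nodes. -/
def InitSet (E : Finset (V × V)) : Finset V :=
  Finset.univ.filter fun X => Pre E X = ∅

/-- Assignments over a subset `U` of the nodes. -/
abbrev Asg (U : Finset V) : Type := {x // x ∈ U} → Bool

/-- A full assignment `b` agrees with a partial assignment `d` on `U`. -/
abbrev Agrees (b : V → Bool) (U : Finset V) (d : Asg U) : Prop :=
  ∀ x : {x // x ∈ U}, b x.1 = d x

/-- A generalized Bayesian network over node set `V`. -/
structure GBN (V : Type) [Fintype V] [DecidableEq V] where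
  /-- the directed edges -/
  edges : Finset (V × V)
  /-- CPT entries: the probability of `X = T` given an assignment of the parents of `X` -/
  cpt : (X : V) → Asg (Pre edges X) → ℝ
  cpt_nonneg : ∀ X b, 0 ≤ cpt X b
  cpt_le_one : ∀ X b, cpt X b ≤ 1
  /-- the initial distribution over assignments of the initial nodes -/
  ι : Asg (InitSet edges) → ℝ
  ι_dist : IsDist ι

/-- Probability of an event (set of full assignments) under `μ`. -/
def probIf (μ : (V → Bool) → ℝ) (p : (V → Bool) → Prop) : ℝ :=
  ∑ b : V → Bool, if p b then μ b else 0

/-- The marginal distribution of `μ` on `U`. -/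
def marginal (μ : (V → Bool) → ℝ) (U : Finset V) : Asg U → ℝ :=
  fun d => probIf μ fun b => Agrees b U d

/-- `Pr(X = v | parents as given by b)`. -/
def copyProb (B : GBN V) (X : V) (v : Bool) (b : V → Bool) : ℝ :=
  if v then B.cpt X (fun p => b p.1) else 1 - B.cpt X (fun p => b p.1)

/-- The standard BN semantics (chain rule) of a GBN. -/
def distBN (B : GBN V) (b : V → Bool) : ℝ :=
  B.ι (fun x => b x.1) *
    ∏ X ∈ Finset.univ \ InitSet B.edges, copyProb B X (b X) b

/-- The edge set contains no directed cycle. -/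
def Acyclic (E : Finset (V × V)) : Prop :=
  ∀ x : V, ¬ Relation.TransGen (fun a b => (a, b) ∈ E) x x

/-- `C` is a cutset: every directed cycle contains a node of `C`. -/
def IsCutset (E : Finset (V × V)) (C : Finset V) : Prop :=
  ∀ x : V, ¬ Relation.TransGen (fun a b => (a, b) ∈ E ∧ a ∉ C ∧ b ∉ C) x x

/-- The standard BN semantics of the `C`-dissected GBN `B↑C↑γ`, as a joint
distribution over assignments of the original nodes `V` together with
assignments of the copies `C'` of the cutset nodes. -/
def distDissect (B : GBN V) (C : Finset V) (γ : Asg C → ℝ)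
    (b : V → Bool) (c : Asg C) : ℝ :=
  B.ι (fun x => b x.1) * γ (fun x => b x.1) *
    (∏ X ∈ (Finset.univ \ InitSet B.edges) \ C, copyProb B X (b X) b) *
    ∏ Y ∈ C.attach, copyProb B Y.1 (c Y) b

/-- `Next(B,C,γ)`: restrict `dist_BN(B↑C↑γ)` to `(V∖C) ∪ C'` and re-identify
the copies with the original cutset nodes. -/
def Next (B : GBN V) (C : Finset V) (γ : Asg C → ℝ) (a : V → Bool) : ℝ :=
  ∑ b : V → Bool,
    if ∀ x : V, x ∉ C → b x = a x then distDissect B C γ b (fun y => a y.1) else 0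

/-- `Extend(B,C,γ) = dist_BN(B↑C↑γ)|_V`. -/
def Extend (B : GBN V) (C : Finset V) (γ : Asg C → ℝ) (a : V → Bool) : ℝ :=
  ∑ c : Asg C, distDissect B C γ a c

/-- Dirac (point) distribution. -/
def DiracD {α : Type} [DecidableEq α] (b : α) : α → ℝ := fun c => if c = b then 1 else 0

/-- Transition matrix of the cutset Markov chain `M_{B↑C}`:
`P(b,c) = Next(B,C,Dirac(b))|_C (c)`. -/
def cutsetP (B : GBN V) (C : Finset V) (b c : Asg C) : ℝ :=
  marginal (Next B C (DiracD b)) C c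

/-- Vector-matrix multiplication `γ·P`. -/
def vecMul {α : Type} [Fintype α] (γ : α → ℝ) (P : α → α → ℝ) : α → ℝ :=
  fun c => ∑ b, γ b * P b c

/-- The transient distributions `γ0·P^n`. -/
def matIter {α : Type} [Fintype α] (P : α → α → ℝ) (γ0 : α → ℝ) : ℕ → (α → ℝ)
  | 0 => γ0
  | n + 1 => vecMul (matIter P γ0 n) P

/-- The sequence `γ_{n+1} = Next(B,C,γ_n)|_C`. -/
def nextSeq (B : GBN V) (C : Finset V) (γ0 : Asg C → ℝ) : ℕ → (Asg C → ℝ)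
  | 0 => γ0
  | n + 1 => marginal (Next B C (nextSeq B C γ0 n)) C

/-- Cesàro averages of a sequence of vectors. -/
def cesaro {α : Type} (f : ℕ → α → ℝ) (n : ℕ) : α → ℝ :=
  fun a => (∑ i ∈ Finset.range (n + 1), f i a) / (n + 1)

/-- The Markov chain semantics `[B]_{MC-C}`: image of
`γ0 ↦ Extend(B,C,lrf^{γ0})` over all initial cutset distributions `γ0`,
where `lrf^{γ0}` is the Cesàro limit of the transient distributions. -/
def MCSem (B : GBN V) (C : Finset V) : Set ((V → Bool) → ℝ) :=
  { μ | ∃ γ0 γ, IsDist γ0 ∧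
      Tendsto (cesaro (matIter (cutsetP B C) γ0)) atTop (nhds γ) ∧
      μ = Extend B C γ }

/-- The limit semantics `[B]_{Lim-C}`. -/
def LimSem (B : GBN V) (C : Finset V) : Set ((V → Bool) → ℝ) :=
  { μ | ∃ γ0 γ, IsDist γ0 ∧
      Tendsto (nextSeq B C γ0) atTop (nhds γ) ∧
      μ = Extend B C γ }

/-- The limit average semantics `[B]_{LimAvg-C}`. -/
def LimAvgSem (B : GBN V) (C : Finset V) : Set ((V → Bool) → ℝ) :=
  { μ | ∃ γ0 γ, IsDist γ0 ∧
      Tendsto (cesaro (nextSeq B C γ0)) atTop (nhds γ) ∧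
      μ = Extend B C γ }

/-- The Markov chain semantics in stationary-distribution form:
`{ Extend(B,C,γ) : γ a distribution with γ = γ·P }`. -/
def MCStatSem (B : GBN V) (C : Finset V) : Set ((V → Bool) → ℝ) :=
  { μ | ∃ γ : Asg C → ℝ, IsDist γ ∧ γ = vecMul γ (cutsetP B C) ∧ μ = Extend B C γ }

/-- Strong CPT-consistency of `μ` for node `X`. -/
def StrongCPT (B : GBN V) (μ : (V → Bool) → ℝ) (X : V) : Prop :=
  ∀ c : Asg (Pre B.edges X),
    probIf μ (fun f => f X = true ∧ Agrees f (Pre B.edges X) c) =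
      probIf μ (fun f => Agrees f (Pre B.edges X) c) * B.cpt X c

/-- Weak CPT-consistency of `μ` for node `X`. -/
def WeakCPT (B : GBN V) (μ : (V → Bool) → ℝ) (X : V) : Prop :=
  probIf μ (fun f => f X = true) =
    ∑ c : Asg (Pre B.edges X),
      probIf μ (fun f => Agrees f (Pre B.edges X) c) * B.cpt X c

/-- The CPT semantics `[B]_{Cpt}`. -/
def CptSem (B : GBN V) : Set ((V → Bool) → ℝ) :=
  { μ | IsDist μ ∧ marginal μ (InitSet B.edges) = B.ι ∧
      ∀ X, X ∉ InitSet B.edges → StrongCPT B μ X }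

/-- `(X ⊥ Y | Z) ∈ Indep(μ)`. -/
def IndepTriple (μ : (V → Bool) → ℝ) (X Y Z : Finset V) : Prop :=
  ∀ (a : Asg X) (b : Asg Y) (c : Asg Z),
    probIf μ (fun f => Agrees f Y b ∧ Agrees f Z c) = 0 ∨
    probIf μ (fun f => Agrees f X a ∧ Agrees f Y b ∧ Agrees f Z c) /
        probIf μ (fun f => Agrees f Y b ∧ Agrees f Z c) =
      probIf μ (fun f => Agrees f X a ∧ Agrees f Z c) /
        probIf μ (fun f => Agrees f Z c)

def PairwiseDisjoint3 (X Y Z : Finset V) : Prop :=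
  Disjoint X Y ∧ Disjoint X Z ∧ Disjoint Y Z

/-- `Indep(μ)` as a set of triples. -/
def IndepSet (μ : (V → Bool) → ℝ) : Set (Finset V × Finset V × Finset V) :=
  { t | PairwiseDisjoint3 t.1 t.2.1 t.2.2 ∧ IndepTriple μ t.1 t.2.1 t.2.2 }

/-- The CPT-I semantics `[B]_{Cpt-I}`. -/
def CptISem (B : GBN V) (I : Set (Finset V × Finset V × Finset V)) :
    Set ((V → Bool) → ℝ) :=
  { μ | μ ∈ CptSem B ∧ I ⊆ IndepSet μ }

/-! d-separation -/

def Adjacent (E : Finset (V × V)) (x y : V) : Prop := (x, y) ∈ E ∨ (y, x) ∈ E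

/-- Reachability along directed edges (including the node itself). -/
def Reaches (E : Finset (V × V)) (x y : V) : Prop :=
  Relation.ReflTransGen (fun a b => (a, b) ∈ E) x y

/-- An intermediate triple `a, w, b` on a path blocks it given `Z`:
either `w ∈ Z` and `w` lies in a chain or a fork, or `w` lies in a collider
and no node reachable from `w` (including `w`) is in `Z`. -/
def BlockedTriple (E : Finset (V × V)) (Z : Finset V) (a w b : V) : Prop :=
  (w ∈ Z ∧ (((a, w) ∈ E ∧ (w, b) ∈ E) ∨ ((b, w) ∈ E ∧ (w, a) ∈ E) ∨
      ((w, a) ∈ E ∧ (w, b) ∈ E))) ∨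
  ((a, w) ∈ E ∧ (b, w) ∈ E ∧ ∀ d, Reaches E w d → d ∉ Z)

/-- A path (as a list of nodes) is blocked given `Z`. -/
def Blocked (E : Finset (V × V)) (Z : Finset V) (W : List V) : Prop :=
  ∃ l₁ a w b l₂, W = l₁ ++ a :: w :: b :: l₂ ∧ BlockedTriple E Z a w b

/-- `x` and `y` are d-separated given `Z`: every undirected simple path
from `x` to `y` is blocked given `Z`. -/
def DSepNodes (E : Finset (V × V)) (x y : V) (Z : Finset V) : Prop :=
  ∀ W : List V, W.Chain' (Adjacent E) → W.Nodup →
    W.head? = some x → W.getLast? = some y → Blocked E Z W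

def DSep (E : Finset (V × V)) (X Y Z : Finset V) : Prop :=
  ∀ x ∈ X, ∀ y ∈ Y, DSepNodes E x y Z

/-- `d-sep(G)` as a set of triples of pairwise disjoint node sets. -/
def DSepSet (E : Finset (V × V)) : Set (Finset V × Finset V × Finset V) :=
  { t | PairwiseDisjoint3 t.1 t.2.1 t.2.2 ∧ DSep E t.1 t.2.1 t.2.2 }

/-- `Close(G)`: add an edge between every ordered pair of distinct initial nodes. -/
def Close (E : Finset (V × V)) : Finset (V × V) :=
  E ∪ ((InitSet E ×ˢ InitSet E).filter fun p => p.1 ≠ p.2)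

/-- `G[C]`: remove all edges into nodes of `C` (so the nodes of `C` are initial). -/
def CutGraph (E : Finset (V × V)) (C : Finset V) : Finset (V × V) :=
  E.filter fun e => e.2 ∉ C

/-- `ι` is a product distribution: it factorizes into its single-node marginals,
i.e. the initial nodes are mutually independent under `ι`. -/
def IsProductDist {U : Finset V} (ι : Asg U → ℝ) : Prop :=
  ∀ b : Asg U,
    ι b = ∏ x : {x // x ∈ U}, ∑ b' : Asg U, if b' x = b x then ι b' else 0

/-! Markov chain notions -/

/-- Reachability in the underlying graph of a DTMC. -/
def MCReach {α : Type} (P : α → α → ℝ) (x y : α) : Prop :=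
  Relation.ReflTransGen (fun a b => 0 < P a b) x y

/-- Bottom strongly connected component of a DTMC: nonempty, closed under
reachability, and strongly connected. -/
def IsBSCC {α : Type} (P : α → α → ℝ) (D : Set α) : Prop :=
  D.Nonempty ∧ (∀ x ∈ D, ∀ y, MCReach P x y → y ∈ D) ∧
    ∀ x ∈ D, ∀ y ∈ D, MCReach P x y

/-- Walks of a given length along positive-probability transitions. -/
def walkLen {α : Type} (P : α → α → ℝ) : ℕ → α → α → Prop
  | 0, x, y => x = y
  | n + 1, x, y => ∃ z, 0 < P x z ∧ walkLen P n z y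

/-- The lengths of the cycles of `D`. -/
def CycleLens {α : Type} (P : α → α → ℝ) (D : Set α) : Set ℕ :=
  { n | 0 < n ∧ ∃ x ∈ D, walkLen P n x x }

/-- `D` is aperiodic: the gcd of the lengths of its cycles equals 1. -/
def AperiodicBSCC {α : Type} (P : α → α → ℝ) (D : Set α) : Prop :=
  ∀ d : ℕ, (∀ n ∈ CycleLens P D, d ∣ n) → d = 1

/-- `D` is periodic: the gcd of the lengths of its cycles is greater than 1. -/
def PeriodicBSCC {α : Type} (P : α → α → ℝ) (D : Set α) : Prop :=
  ∃ d : ℕ, 1 < d ∧ ∀ n ∈ CycleLens P D, d ∣ n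

/-- A GBN is smooth if all CPT entries and all values of `ι` lie in `(0,1)`. -/
def Smooth (B : GBN V) : Prop :=
  (∀ X b, B.cpt X b ∈ Set.Ioo (0 : ℝ) 1) ∧ ∀ d, B.ι d ∈ Set.Ioo (0 : ℝ) 1

end GBNPaper

/-!
Unfolding the definitions, `γₙ₊₁ = Next(B,C,γₙ)|_C` is the orbit `γ₀ Pⁿ` of the cutset chain,
so `[B]_{MC-C} = [B]_{LimAvg-C}`, and a limit is also a Cesàro limit. For the converse note that
the chain is substochastic: from a state `b` the mass surviving one step is the `ι`-probability
`m(b)` of the values that `b` gives to the initial cutset nodes (the remaining nodes outside the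
cutset form an acyclic network and sum out), while the copies of the initial cutset nodes are
drawn afresh, independently of `b`. Hence `P m = ρ m` for a constant `ρ ≤ 1`. If `ρ < 1`, every
orbit dies out, so the only Cesàro limit is `0`, and it is a limit. If `ρ = 1`, then `ι` fixes
the initial cutset nodes almost surely, so every state keeps all or none of its mass; a Cesàro
limit `γ` is stationary, and adding to it the initial mass of the dying states gives a
distribution whose orbit is `γ` from the first step on.
-/

namespace GBNPaper

section BoolSums

variable {ι : Type} [Fintype ι] [DecidableEq ι]

lemma two_mul_sum_mul_apply (X : ι) (h : (ι → Bool) → ℝ) (r : Bool → (ι → Bool) → ℝ)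
    (hh : ∀ b v, h (Function.update b X v) = h b)
    (hr : ∀ w b v, r w (Function.update b X v) = r w b) :
    2 * ∑ b, h b * r (b X) b = ∑ b, h b * (r false b + r true b) := by
  let flip : (ι → Bool) → (ι → Bool) := fun b => Function.update b X (!b X)
  have hflip : Function.Involutive flip := fun b => by simp [flip]
  have hswap : ∑ b, h b * r (b X) b = ∑ b, h b * r (!b X) b := by
    rw [← Equiv.sum_comp hflip.toPerm]
    refine Finset.sum_congr rfl fun b _ => ?_
    simp only [Function.Involutive.coe_toPerm, flip, hh, hr, Function.update_self]
  rw [two_mul]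
  nth_rewrite 2 [hswap]
  rw [← Finset.sum_add_distrib]
  refine Finset.sum_congr rfl fun b _ => ?_
  cases b X <;> simp only [Bool.not_false, Bool.not_true] <;> ring

/-- Each kernel sums to one, so the kernels can be summed out one sink of `S` at a time; the
right-hand side pins the summed-out coordinates to `false`. -/
theorem sum_mul_prod_kernel (dep : ι → ι → Prop) (q : ι → Bool → (ι → Bool) → ℝ)
    (hq : ∀ X b, q X false b + q X true b = 1)
    (hq_dep : ∀ X w b Y v, ¬ dep Y X → q X w (Function.update b Y v) = q X w b)
    (S : Finset ι) (hS : ∀ T ⊆ S, T.Nonempty → ∃ X ∈ T, ∀ Y ∈ T, ¬ dep X Y)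
    (g : (ι → Bool) → ℝ) (hg : ∀ b, ∀ Y ∈ S, ∀ v, g (Function.update b Y v) = g b) :
    ∑ b, g b * ∏ X ∈ S, q X (b X) b = ∑ b, g b * ∏ X ∈ S, if b X = false then 1 else 0 := by
  induction S using Finset.strongInduction generalizing g with
  | H S ih =>
  rcases S.eq_empty_or_nonempty with rfl | hne
  · rfl
  obtain ⟨X, hXS, hsink⟩ := hS S subset_rfl hne
  let ind : Bool → (ι → Bool) → ℝ := fun w _ => if w = false then 1 else 0
  let h : (ι → Bool) → ℝ := fun b => g b * ∏ Y ∈ S.erase X, q Y (b Y) b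
  have hh : ∀ b v, h (Function.update b X v) = h b := fun b v => by
    refine congr_arg₂ _ (hg b X hXS v) (Finset.prod_congr rfl fun Y hY => ?_)
    have hYX := Finset.ne_of_mem_erase hY
    rw [Function.update_of_ne hYX, hq_dep _ _ _ _ _ (hsink Y (Finset.mem_of_mem_erase hY))]
  have hq_X : 2 * ∑ b, h b * q X (b X) b = ∑ b, h b := by
    simpa [hq] using two_mul_sum_mul_apply X h (q X) hh
      (fun w b v => hq_dep X w b X v (hsink X hXS))
  have hind_X : 2 * ∑ b, h b * ind (b X) b = ∑ b, h b := by
    simpa [ind] using two_mul_sum_mul_apply X h ind hh (fun _ _ _ => rfl)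
  have hsplit : ∀ (p : ι → Bool → (ι → Bool) → ℝ) b,
      g b * ∏ Y ∈ S, p Y (b Y) b = g b * (∏ Y ∈ S.erase X, p Y (b Y) b) * p X (b X) b :=
    fun p b => by rw [← Finset.mul_prod_erase S _ hXS]; ring
  calc ∑ b, g b * ∏ Y ∈ S, q Y (b Y) b
      = ∑ b, h b * ind (b X) b := by
        simp only [hsplit q]
        change ∑ b, h b * q X (b X) b = _
        linarith
    _ = ∑ b, (g b * ind (b X) b) * ∏ Y ∈ S.erase X, q Y (b Y) b :=
        Finset.sum_congr rfl fun b _ => by ring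
    _ = ∑ b, (g b * ind (b X) b) * ∏ Y ∈ S.erase X, if b Y = false then 1 else 0 := by
        refine ih _ (Finset.erase_ssubset hXS)
          (fun T hT => hS T (hT.trans (Finset.erase_subset X S))) _ fun b Y hY v => ?_
        rw [Function.update_of_ne (Finset.ne_of_mem_erase hY).symm,
          hg b Y (Finset.mem_of_mem_erase hY)]
    _ = ∑ b, g b * ∏ Y ∈ S, if b Y = false then 1 else 0 := by
        simp only [hsplit fun Y w _ => if w = false then (1 : ℝ) else 0]
        exact Finset.sum_congr rfl fun b _ => by ring

end BoolSums

lemma tendsto_cesaro {α : Type} {f : ℕ → α → ℝ} {γ : α → ℝ} (h : Tendsto f atTop (nhds γ)) :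
    Tendsto (cesaro f) atTop (nhds γ) := by
  rw [tendsto_pi_nhds] at h ⊢
  intro a
  refine ((tendsto_add_atTop_iff_nat 1).mpr (h a).cesaro).congr fun n => ?_
  simp [cesaro, div_eq_inv_mul]

section SubstochasticChain

variable {α : Type} [Fintype α] {P : α → α → ℝ}

lemma matIter_nonneg (hP : ∀ a b, 0 ≤ P a b) {γ₀ : α → ℝ} (h₀ : ∀ a, 0 ≤ γ₀ a) (n : ℕ)
    (a : α) : 0 ≤ matIter P γ₀ n a := by
  induction n generalizing a with
  | zero => exact h₀ a
  | succ n ih => exact Finset.sum_nonneg fun b _ => mul_nonneg (ih b) (hP b a)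

lemma vecMul_cesaro_matIter (γ₀ : α → ℝ) (n : ℕ) (c : α) :
    vecMul (cesaro (matIter P γ₀) n) P c = cesaro (matIter P γ₀) (n + 1) c +
      (cesaro (matIter P γ₀) (n + 1) c - γ₀ c) * (1 / ((n : ℝ) + 1)) := by
  have hshift : ∑ b, cesaro (matIter P γ₀) n b * P b c =
      (∑ i ∈ Finset.range (n + 1), matIter P γ₀ (i + 1) c) / (n + 1) := by
    simp only [cesaro, div_mul_eq_mul_div, Finset.sum_mul, ← Finset.sum_div]
    rw [Finset.sum_comm]
    rfl
  rw [vecMul, hshift, cesaro, Finset.sum_range_succ' _ (n + 1)]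
  simp only [matIter]
  push_cast
  field_simp
  ring

lemma vecMul_eq_of_tendsto_cesaro {γ₀ γ : α → ℝ}
    (h : Tendsto (cesaro (matIter P γ₀)) atTop (nhds γ)) : vecMul γ P = γ := by
  have hpt := tendsto_pi_nhds.mp h
  funext c
  have hlim : Tendsto (fun n => vecMul (cesaro (matIter P γ₀) n) P c) atTop
      (nhds (vecMul γ P c)) :=
    tendsto_finsetSum _ fun b _ => (hpt b).mul_const (P b c)
  have hshift : Tendsto (fun n => cesaro (matIter P γ₀) (n + 1) c) atTop (nhds (γ c)) :=
    (tendsto_add_atTop_iff_nat 1).mpr (hpt c)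
  have hid : Tendsto (fun n => vecMul (cesaro (matIter P γ₀) n) P c) atTop
      (nhds (γ c + (γ c - γ₀ c) * 0)) := by
    simp only [vecMul_cesaro_matIter]
    exact hshift.add
      ((hshift.sub tendsto_const_nhds).mul tendsto_one_div_add_atTop_nhds_zero_nat)
  rw [mul_zero, add_zero] at hid
  exact tendsto_nhds_unique hlim hid

lemma sum_vecMul {M : α → ℝ} (hrow : ∀ a, ∑ b, P a b = M a) (γ : α → ℝ) :
    ∑ c, vecMul γ P c = ∑ a, γ a * M a := by
  simp only [vecMul, ← hrow, Finset.mul_sum]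
  exact Finset.sum_comm

lemma sum_vecMul_mul {M : α → ℝ} {ρ : ℝ} (hqs : ∀ a, ∑ c, P a c * M c = ρ * M a)
    (γ : α → ℝ) : ∑ c, vecMul γ P c * M c = ρ * ∑ a, γ a * M a := by
  simp only [vecMul, Finset.sum_mul, Finset.mul_sum]
  rw [Finset.sum_comm]
  refine Finset.sum_congr rfl fun a _ => ?_
  rw [← mul_left_comm, ← hqs, Finset.mul_sum]
  exact Finset.sum_congr rfl fun c _ => by ring

lemma sum_matIter_mul {M : α → ℝ} {ρ : ℝ} (hqs : ∀ a, ∑ c, P a c * M c = ρ * M a)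
    (γ₀ : α → ℝ) (n : ℕ) : ∑ a, matIter P γ₀ n a * M a = ρ ^ n * ∑ a, γ₀ a * M a := by
  induction n with
  | zero => simp [matIter]
  | succ n ih => rw [matIter, sum_vecMul_mul hqs, ih]; ring

lemma tendsto_matIter_zero {M : α → ℝ} {ρ : ℝ} (hP : ∀ a b, 0 ≤ P a b)
    (hrow : ∀ a, ∑ b, P a b = M a) (hqs : ∀ a, ∑ c, P a c * M c = ρ * M a)
    (hρ₀ : 0 ≤ ρ) (hρ₁ : ρ < 1) {γ₀ : α → ℝ} (h₀ : ∀ a, 0 ≤ γ₀ a) :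
    Tendsto (matIter P γ₀) atTop (nhds 0) := by
  rw [tendsto_pi_nhds]
  intro a
  rw [← tendsto_add_atTop_iff_nat 1]
  have hmass : ∀ n, matIter P γ₀ (n + 1) a ≤ ρ ^ n * ∑ b, γ₀ b * M b := fun n => by
    rw [← sum_matIter_mul hqs, ← sum_vecMul hrow]
    exact Finset.single_le_sum (fun b _ => matIter_nonneg hP h₀ (n + 1) b) (Finset.mem_univ a)
  refine squeeze_zero (fun n => matIter_nonneg hP h₀ (n + 1) a) hmass ?_
  simpa using (tendsto_pow_atTop_nhds_zero_of_lt_one hρ₀ hρ₁).mul_const (∑ b, γ₀ b * M b)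

/-- The witness is `γ` plus the initial mass of the states that lose all their mass. -/
lemma exists_isDist_matIter_succ_eq {M : α → ℝ} (hP : ∀ a b, 0 ≤ P a b)
    (hrow : ∀ a, ∑ b, P a b = M a) (hqs : ∀ a, ∑ c, P a c * M c = M a)
    (hbin : ∀ a, M a = 0 ∨ M a = 1) {γ₀ γ : α → ℝ} (h₀ : IsDist γ₀)
    (hcv : Tendsto (cesaro (matIter P γ₀)) atTop (nhds γ)) :
    ∃ γ₀', IsDist γ₀' ∧ ∀ n, matIter P γ₀' (n + 1) = γ := by
  have hpt := tendsto_pi_nhds.mp hcv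
  have hstat := vecMul_eq_of_tendsto_cesaro hcv
  set w := ∑ a, γ₀ a * M a
  have hw : ∀ n, ∑ a, matIter P γ₀ n a * M a = w := fun n => by
    simpa using sum_matIter_mul (ρ := 1) (fun a => (hqs a).trans (one_mul _).symm) γ₀ n
  have hγ_nonneg : ∀ a, 0 ≤ γ a := fun a => ge_of_tendsto' (hpt a) fun n =>
    div_nonneg (Finset.sum_nonneg fun i _ => matIter_nonneg hP h₀.1 i a) (by positivity)
  have hγM : ∑ a, γ a * M a = w := by
    have hcesaro : ∀ n, ∑ a, cesaro (matIter P γ₀) n a * M a = w := fun n => by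
      simp only [cesaro, div_mul_eq_mul_div, Finset.sum_mul, ← Finset.sum_div]
      rw [Finset.sum_comm]
      simp only [hw, Finset.sum_const, Finset.card_range, nsmul_eq_mul]
      field_simp
      push_cast
      ring
    refine tendsto_nhds_unique (tendsto_finsetSum _ fun a _ => (hpt a).mul_const (M a)) ?_
    simpa only [hcesaro] using tendsto_const_nhds
  let ζ : α → ℝ := fun a => if M a = 0 then γ₀ a else 0
  have hζP : ∀ c, vecMul ζ P c = 0 := fun c => Finset.sum_eq_zero fun a _ => by
    by_cases ha : M a = 0
    · have hrow0 := (Finset.sum_eq_zero_iff_of_nonneg fun b _ => hP a b).mp ((hrow a).trans ha)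
      simp [hrow0 c (Finset.mem_univ c)]
    · simp [ζ, ha]
  have hζsum : ∑ a, ζ a = 1 - w := by
    have hsplit : ∀ a, γ₀ a = γ₀ a * M a + ζ a := fun a => by
      rcases hbin a with ha | ha <;> simp [ζ, ha]
    have := h₀.2
    rw [Finset.sum_congr rfl fun a _ => hsplit a, Finset.sum_add_distrib] at this
    linarith
  have hstep : vecMul (γ + ζ) P = γ := funext fun c => by
    simp only [vecMul, Pi.add_apply, add_mul, Finset.sum_add_distrib]
    rw [← vecMul, ← vecMul, hζP, hstat, add_zero]
  refine ⟨γ + ζ, ⟨fun a => add_nonneg (hγ_nonneg a) ?_, ?_⟩, fun n => ?_⟩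
  · by_cases ha : M a = 0 <;> simp [ζ, ha, h₀.1 a]
  · have hγsum : ∑ a, γ a = w := by rw [← hγM, ← sum_vecMul hrow, hstat]
    rw [Finset.sum_congr rfl fun a _ => Pi.add_apply γ ζ a, Finset.sum_add_distrib, hγsum, hζsum]
    ring
  · induction n with
    | zero => exact hstep
    | succ n ih => rw [matIter, ih, hstat]

theorem exists_isDist_tendsto_matIter_of_tendsto_cesaro {M : α → ℝ} {ρ : ℝ}
    (hP : ∀ a b, 0 ≤ P a b) (hrow : ∀ a, ∑ b, P a b = M a)
    (hqs : ∀ a, ∑ c, P a c * M c = ρ * M a) (hρ₀ : 0 ≤ ρ) (hρ₁ : ρ ≤ 1)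
    (hbin : ρ = 1 → ∀ a, M a = 0 ∨ M a = 1) {γ₀ γ : α → ℝ} (h₀ : IsDist γ₀)
    (hcv : Tendsto (cesaro (matIter P γ₀)) atTop (nhds γ)) :
    ∃ γ₀', IsDist γ₀' ∧ Tendsto (matIter P γ₀') atTop (nhds γ) := by
  rcases hρ₁.lt_or_eq with hlt | rfl
  · have hzero := tendsto_matIter_zero hP hrow hqs hρ₀ hlt h₀.1
    obtain rfl := tendsto_nhds_unique hcv (tendsto_cesaro hzero)
    exact ⟨γ₀, h₀, hzero⟩
  · obtain ⟨γ₀', hdist, hconst⟩ := exists_isDist_matIter_succ_eq hP hrow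
      (fun a => (hqs a).trans (one_mul _)) (hbin rfl) h₀ hcv
    refine ⟨γ₀', hdist, (tendsto_add_atTop_iff_nat 1).mp ?_⟩
    simpa only [hconst] using tendsto_const_nhds

end SubstochasticChain

lemma exists_sink_of_acyclic {α : Type} [Finite α] {r : α → α → Prop}
    (hr : ∀ x, ¬ Relation.TransGen r x x) {T : Finset α} (hT : T.Nonempty) :
    ∃ x ∈ T, ∀ y ∈ T, ¬ r x y := by
  let R : α → α → Prop := fun x y => Relation.TransGen r y x
  have : IsTrans α R := ⟨fun _ _ _ hab hbc => hbc.trans hab⟩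
  have : Std.Irrefl R := ⟨hr⟩
  obtain ⟨x, hxT, hmin⟩ := (Finite.wellFounded_of_trans_of_irrefl R).has_min (T : Set α) hT
  exact ⟨x, hxT, fun y hyT hxy => hmin y hyT (Relation.TransGen.single hxy)⟩

lemma IsCutset.exists_sink {V : Type} [Finite V] {E : Finset (V × V)} {C : Finset V}
    (hC : IsCutset E C) {T : Finset V} (hTC : ∀ x ∈ T, x ∉ C) (hT : T.Nonempty) :
    ∃ X ∈ T, ∀ Y ∈ T, (X, Y) ∉ E := by
  obtain ⟨X, hXT, hX⟩ := exists_sink_of_acyclic hC hT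
  exact ⟨X, hXT, fun Y hYT hXY => hX Y hYT ⟨hXY, hTC X hXT, hTC Y hYT⟩⟩

lemma mem_Pre {V : Type} [DecidableEq V] {E : Finset (V × V)} {x X : V} :
    x ∈ Pre E X ↔ (x, X) ∈ E := by
  simp [Pre]

section CopyProb

variable {V : Type} [Fintype V] [DecidableEq V] (B : GBN V)

lemma copyProb_nonneg (X : V) (v : Bool) (b : V → Bool) : 0 ≤ copyProb B X v b := by
  cases v <;> simp [copyProb, B.cpt_nonneg, B.cpt_le_one]

lemma copyProb_false_add_true (X : V) (b : V → Bool) :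
    copyProb B X false b + copyProb B X true b = 1 := by
  simp [copyProb]

lemma copyProb_le_one (X : V) (v : Bool) (b : V → Bool) : copyProb B X v b ≤ 1 := by
  have := copyProb_false_add_true B X b
  cases v <;> linarith [copyProb_nonneg B X false b, copyProb_nonneg B X true b]

lemma copyProb_congr (X : V) (v : Bool) {b b' : V → Bool}
    (h : ∀ x ∈ Pre B.edges X, b x = b' x) : copyProb B X v b = copyProb B X v b' := by
  have : (fun p : {x // x ∈ Pre B.edges X} => b p.1) = fun p => b' p.1 :=
    funext fun p => h p.1 p.2
  simp only [copyProb, this]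

lemma copyProb_update {X Y : V} (hYX : (Y, X) ∉ B.edges) (w : Bool) (b : V → Bool) (v : Bool) :
    copyProb B X w (Function.update b Y v) = copyProb B X w b :=
  copyProb_congr B X w fun x hx =>
    Function.update_of_ne (fun h => hYX (by rw [← h]; exact mem_Pre.mp hx)) _ _

lemma copyProb_of_mem_InitSet {X : V} (hX : X ∈ InitSet B.edges) (v : Bool) (b b' : V → Bool) :
    copyProb B X v b = copyProb B X v b' :=
  copyProb_congr B X v fun x hx => by
    simp [(Finset.mem_filter.mp hX).2] at hx

lemma sum_prod_copyProb (C : Finset V) (b : V → Bool) :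
    ∑ c : Asg C, ∏ Y ∈ C.attach, copyProb B Y.1 (c Y) b = 1 := by
  rw [Finset.attach_eq_univ, ← Fintype.prod_sum fun (Y : {x // x ∈ C}) v => copyProb B Y.1 v b]
  simp [add_comm, copyProb_false_add_true]

end CopyProb

section CutsetChain

variable {V : Type} [Fintype V] [DecidableEq V] (B : GBN V) (C : Finset V)

lemma marginal_Next (γ : Asg C → ℝ) (c : Asg C) :
    marginal (Next B C γ) C c = ∑ b, distDissect B C γ b c := by
  let glue : (V → Bool) → V → Bool := fun b x => if h : x ∈ C then c ⟨x, h⟩ else b x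
  have hglue : ∀ a b, Agrees a C c ∧ (∀ x, x ∉ C → b x = a x) ↔ a = glue b := fun a b =>
    ⟨fun ⟨hC, hV⟩ => funext fun x => by
      by_cases hx : x ∈ C
      · simp [glue, hx, hC ⟨x, hx⟩]
      · simp [glue, hx, hV x hx],
     by rintro rfl; exact ⟨fun y => by simp [glue], fun x hx => by simp [glue, hx]⟩⟩
  calc marginal (Next B C γ) C c
      = ∑ a, ∑ b, if a = glue b then distDissect B C γ b c else 0 := by
        refine Finset.sum_congr rfl fun a _ => ?_
        by_cases ha : Agrees a C c
        · have hac : (fun y : {x // x ∈ C} => a y.1) = c := funext ha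
          rw [if_pos ha]
          refine Finset.sum_congr rfl fun b _ => ?_
          by_cases hb : ∀ x, x ∉ C → b x = a x
          · rw [if_pos hb, if_pos ((hglue a b).mp ⟨ha, hb⟩), hac]
          · rw [if_neg hb, if_neg fun h => hb ((hglue a b).mpr h).2]
        · rw [if_neg ha]
          exact (Finset.sum_eq_zero fun b _ => if_neg fun h => ha ((hglue a b).mpr h).1).symm
    _ = ∑ b, distDissect B C γ b c := by
        rw [Finset.sum_comm]
        simp

lemma distDissect_eq_sum_DiracD (γ : Asg C → ℝ) (b : V → Bool) (c : Asg C) :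
    distDissect B C γ b c = ∑ b₀, γ b₀ * distDissect B C (DiracD b₀) b c := by
  simp [distDissect, DiracD, mul_comm, mul_left_comm]

lemma marginal_Next_eq_vecMul (γ : Asg C → ℝ) :
    marginal (Next B C γ) C = vecMul γ (cutsetP B C) := by
  funext c
  simp only [marginal_Next, vecMul, cutsetP, distDissect_eq_sum_DiracD B C γ, Finset.mul_sum]
  exact Finset.sum_comm

lemma nextSeq_eq_matIter (γ₀ : Asg C → ℝ) : nextSeq B C γ₀ = matIter (cutsetP B C) γ₀ := by
  funext n
  induction n with
  | zero => rfl
  | succ n ih => rw [nextSeq, matIter, marginal_Next_eq_vecMul, ih]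

lemma distDissect_nonneg {γ : Asg C → ℝ} (hγ : ∀ c, 0 ≤ γ c) (b : V → Bool) (c : Asg C) :
    0 ≤ distDissect B C γ b c := by
  have hcopy : ∀ s : Finset V, ∀ v : V → Bool, 0 ≤ ∏ X ∈ s, copyProb B X (v X) b :=
    fun s v => Finset.prod_nonneg fun X _ => copyProb_nonneg B X _ b
  exact mul_nonneg (mul_nonneg (mul_nonneg (B.ι_dist.1 _) (hγ _)) (hcopy _ b))
    (Finset.prod_nonneg fun Y _ => copyProb_nonneg B Y.1 _ b)

lemma cutsetP_nonneg (b c : Asg C) : 0 ≤ cutsetP B C b c := by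
  rw [cutsetP, marginal_Next]
  refine Finset.sum_nonneg fun b' _ => distDissect_nonneg B C (fun c' => ?_) b' c
  unfold DiracD
  positivity

lemma sum_distDissect_mul (γ : Asg C → ℝ) (b : V → Bool) (f : Asg C → ℝ) :
    ∑ c, distDissect B C γ b c * f c =
      (∑ c, distDissect B C γ b c) * ∑ c, (∏ Y ∈ C.attach, copyProb B Y.1 (c Y) b) * f c := by
  simp only [distDissect, mul_assoc, ← Finset.mul_sum, sum_prod_copyProb, mul_one]

def initMass (b : Asg C) : ℝ :=
  ∑ d : Asg (InitSet B.edges),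
    if ∀ y : {x // x ∈ C}, ∀ hy : y.1 ∈ InitSet B.edges, d ⟨y, hy⟩ = b y then B.ι d else 0

lemma sum_distDissect (γ : Asg C → ℝ) (b : V → Bool) :
    ∑ c, distDissect B C γ b c = B.ι (fun x => b x.1) * γ (fun x => b x.1) *
      ∏ X ∈ (Finset.univ \ InitSet B.edges) \ C, copyProb B X (b X) b := by
  simp only [distDissect, ← Finset.mul_sum, sum_prod_copyProb, mul_one]

/-- Restriction to the initial nodes is a bijection between the assignments counted on the
two sides. -/
lemma sum_ι_mul_DiracD_eq_initMass (b : Asg C) :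
    ∑ b' : V → Bool, B.ι (fun x => b' x.1) * DiracD b (fun x => b' x.1) *
      ∏ X ∈ (Finset.univ \ InitSet B.edges) \ C, (if b' X = false then 1 else 0) =
      initMass B C b := by
  set I := InitSet B.edges
  set N := (Finset.univ \ I) \ C
  let glue : Asg I → V → Bool := fun d x =>
    if hI : x ∈ I then d ⟨x, hI⟩ else if hC : x ∈ C then b ⟨x, hC⟩ else false
  have hsummand : ∀ b' : V → Bool, B.ι (fun x => b' x.1) * DiracD b (fun x => b' x.1) *
      ∏ X ∈ N, (if b' X = false then (1 : ℝ) else 0) =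
      if (fun x : {x // x ∈ C} => b' x.1) = b ∧ ∀ X ∈ N, b' X = false
        then B.ι (fun x => b' x.1) else 0 := fun b' => by
    rw [Finset.prod_boole, DiracD]
    split_ifs <;> simp_all
  simp only [hsummand, initMass, ← Finset.sum_filter]
  refine Finset.sum_nbij' (fun b' x => b' x.1) glue ?_ ?_ ?_ ?_ fun _ _ => rfl
  · simp only [Finset.mem_filter, Finset.mem_univ, true_and]
    rintro b' ⟨rfl, -⟩ y hy
    rfl
  · simp only [Finset.mem_filter, Finset.mem_univ, true_and]
    intro d hd
    refine ⟨funext fun y => ?_, fun X hX => ?_⟩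
    · by_cases hy : y.1 ∈ I
      · simp [glue, hy, hd y hy]
      · simp [glue, hy]
    · simp only [N, Finset.mem_sdiff, Finset.mem_univ, true_and] at hX
      simp [glue, hX.1, hX.2]
  · simp only [Finset.mem_filter, Finset.mem_univ, true_and]
    rintro b' ⟨rfl, hN⟩
    funext x
    by_cases hI : x ∈ I
    · simp [glue, hI]
    by_cases hC : x ∈ C
    · simp [glue, hI, hC]
    · simp [glue, hI, hC, hN x (by simp [N, hI, hC])]
  · intro d _
    funext x
    simp [glue]

lemma sum_cutsetP (hC : IsCutset B.edges C) (b : Asg C) :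
    ∑ c, cutsetP B C b c = initMass B C b := by
  have hsinks : ∀ T ⊆ (Finset.univ \ InitSet B.edges) \ C, T.Nonempty →
      ∃ X ∈ T, ∀ Y ∈ T, (X, Y) ∉ B.edges := fun T hT hne =>
    hC.exists_sink (fun x hx => (Finset.mem_sdiff.mp (hT hx)).2) hne
  have hupdate : ∀ b' : V → Bool, ∀ Y ∈ (Finset.univ \ InitSet B.edges) \ C, ∀ v,
      B.ι (fun x => Function.update b' Y v x.1) * DiracD b (fun x => Function.update b' Y v x.1) =
        B.ι (fun x => b' x.1) * DiracD b (fun x => b' x.1) := fun b' Y hY v => by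
    simp only [Finset.mem_sdiff, Finset.mem_univ, true_and] at hY
    have hI : ∀ x : {x // x ∈ InitSet B.edges}, Function.update b' Y v x.1 = b' x.1 :=
      fun x => Function.update_of_ne (fun h => hY.1 (by rw [← h]; exact x.2)) _ _
    have hC : ∀ x : {x // x ∈ C}, Function.update b' Y v x.1 = b' x.1 :=
      fun x => Function.update_of_ne (fun h => hY.2 (by rw [← h]; exact x.2)) _ _
    simp only [hI, hC]
  simp only [cutsetP, marginal_Next]
  rw [Finset.sum_comm]
  simp only [sum_distDissect]
  rw [sum_mul_prod_kernel (fun Y X => (Y, X) ∈ B.edges) (copyProb B) (copyProb_false_add_true B)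
    (fun X w b' Y v hYX => copyProb_update B hYX w b' v) _ hsinks _ hupdate]
  exact sum_ι_mul_DiracD_eq_initMass B C b

/-- Copies of initial nodes have no parents, so the state in which they are drawn (here the
constant `false`) is irrelevant. -/
def initCopyWeight (d : Asg (InitSet B.edges)) : ℝ :=
  ∏ y : {x // x ∈ C},
    if hy : y.1 ∈ InitSet B.edges then copyProb B y (d ⟨y, hy⟩) (fun _ => false) else 1

def survivalProb : ℝ := ∑ d, B.ι d * initCopyWeight B C d

lemma initCopyWeight_nonneg (d : Asg (InitSet B.edges)) : 0 ≤ initCopyWeight B C d :=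
  Finset.prod_nonneg fun y _ => by split_ifs <;> simp [copyProb_nonneg]

lemma initCopyWeight_le_copyProb (d : Asg (InitSet B.edges)) (y : {x // x ∈ C})
    (hy : y.1 ∈ InitSet B.edges) :
    initCopyWeight B C d ≤ copyProb B y (d ⟨y, hy⟩) (fun _ => false) := by
  rw [initCopyWeight, ← Finset.mul_prod_erase _ _ (Finset.mem_univ y), dif_pos hy]
  refine mul_le_of_le_one_right (copyProb_nonneg B _ _ _) (Finset.prod_le_one ?_ ?_) <;>
    intro z _ <;> split_ifs <;> simp [copyProb_nonneg, copyProb_le_one]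

lemma initCopyWeight_le_one (d : Asg (InitSet B.edges)) : initCopyWeight B C d ≤ 1 :=
  Finset.prod_le_one (fun y _ => by split_ifs <;> simp [copyProb_nonneg])
    fun y _ => by split_ifs <;> simp [copyProb_le_one]

lemma survivalProb_nonneg : 0 ≤ survivalProb B C :=
  Finset.sum_nonneg fun d _ => mul_nonneg (B.ι_dist.1 d) (initCopyWeight_nonneg B C d)

lemma survivalProb_le_one : survivalProb B C ≤ 1 := by
  rw [← B.ι_dist.2]
  exact Finset.sum_le_sum fun d _ =>
    mul_le_of_le_one_right (B.ι_dist.1 d) (initCopyWeight_le_one B C d)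

lemma sum_prod_copyProb_mul_initMass (b : V → Bool) :
    ∑ c : Asg C, (∏ Y ∈ C.attach, copyProb B Y.1 (c Y) b) * initMass B C c =
      survivalProb B C := by
  simp only [initMass, Finset.mul_sum, survivalProb]
  rw [Finset.sum_comm]
  refine Finset.sum_congr rfl fun d _ => ?_
  let f : {x // x ∈ C} → Bool → ℝ := fun y v =>
    if hy : y.1 ∈ InitSet B.edges then (if d ⟨y, hy⟩ = v then copyProb B y v b else 0)
    else copyProb B y v b
  have hsummand : ∀ c : Asg C, (∏ Y ∈ C.attach, copyProb B Y.1 (c Y) b) *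
      (if ∀ y : {x // x ∈ C}, ∀ hy : y.1 ∈ InitSet B.edges, d ⟨y, hy⟩ = c y then B.ι d else 0) =
      B.ι d * ∏ y, f y (c y) := fun c => by
    rw [Finset.attach_eq_univ]
    split_ifs with hc
    · rw [mul_comm]
      congr 1
      refine Finset.prod_congr rfl fun y _ => ?_
      by_cases hy : y.1 ∈ InitSet B.edges <;> simp [f, hy, hc]
    · push Not at hc
      obtain ⟨y, hy, hne⟩ := hc
      rw [mul_zero, Finset.prod_eq_zero (f := fun y => f y (c y)) (Finset.mem_univ y)
        (by simp [f, hy, hne]), mul_zero]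
  have hfactor : ∀ y, f y false + f y true =
      if hy : y.1 ∈ InitSet B.edges then copyProb B y (d ⟨y, hy⟩) (fun _ => false) else 1 :=
    fun y => by
      by_cases hy : y.1 ∈ InitSet B.edges
      · rw [dif_pos hy, copyProb_of_mem_InitSet B hy _ _ b]
        simp only [f, dif_pos hy]
        cases d ⟨y, hy⟩ <;> simp
      · simp [f, hy, copyProb_false_add_true]
  simp only [hsummand, ← Finset.mul_sum, ← Fintype.prod_sum, Fintype.sum_bool, initCopyWeight]
  simp only [add_comm (f _ true), hfactor]

lemma sum_cutsetP_mul_initMass (hC : IsCutset B.edges C) (b : Asg C) :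
    ∑ c, cutsetP B C b c * initMass B C c = survivalProb B C * initMass B C b := by
  have hrow : ∑ c, cutsetP B C b c = ∑ b', ∑ c, distDissect B C (DiracD b) b' c := by
    simp only [cutsetP, marginal_Next]
    exact Finset.sum_comm
  have hrow_mul : ∑ c, cutsetP B C b c * initMass B C c =
      ∑ b', ∑ c, distDissect B C (DiracD b) b' c * initMass B C c := by
    simp only [cutsetP, marginal_Next, Finset.sum_mul]
    exact Finset.sum_comm
  rw [← sum_cutsetP B C hC b, hrow, hrow_mul, Finset.mul_sum]
  refine Finset.sum_congr rfl fun b' _ => ?_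
  rw [sum_distDissect_mul, sum_prod_copyProb_mul_initMass, mul_comm]

lemma initCopyWeight_eq_one (h : survivalProb B C = 1) {d : Asg (InitSet B.edges)}
    (hd : B.ι d ≠ 0) : initCopyWeight B C d = 1 := by
  have hdefect : ∑ d, B.ι d * (1 - initCopyWeight B C d) = 0 := by
    simp only [mul_sub, mul_one, Finset.sum_sub_distrib, B.ι_dist.2]
    rw [← survivalProb, h, sub_self]
  have hzero := (Finset.sum_eq_zero_iff_of_nonneg fun d _ => mul_nonneg (B.ι_dist.1 d)
    (sub_nonneg.mpr (initCopyWeight_le_one B C d))).mp hdefect d (Finset.mem_univ d)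
  linarith [(mul_eq_zero.mp hzero).resolve_left hd]

/-- The copy of an initial cutset node would have to take both values with probability one. -/
lemma agree_of_survivalProb_eq_one (h : survivalProb B C = 1) {d d' : Asg (InitSet B.edges)}
    (hd : B.ι d ≠ 0) (hd' : B.ι d' ≠ 0) (y : {x // x ∈ C}) (hy : y.1 ∈ InitSet B.edges) :
    d ⟨y, hy⟩ = d' ⟨y, hy⟩ := by
  by_contra hne
  have hle := initCopyWeight_le_copyProb B C d y hy
  have hle' := initCopyWeight_le_copyProb B C d' y hy
  rw [initCopyWeight_eq_one B C h hd] at hle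
  rw [initCopyWeight_eq_one B C h hd'] at hle'
  have hpair : copyProb B y (d ⟨y, hy⟩) (fun _ => false) +
      copyProb B y (d' ⟨y, hy⟩) (fun _ => false) = 1 := by
    revert hne
    cases d ⟨y, hy⟩ <;> cases d' ⟨y, hy⟩ <;> simp [copyProb_false_add_true, add_comm]
  linarith

lemma initMass_eq_zero_or_one (h : survivalProb B C = 1) (b : Asg C) :
    initMass B C b = 0 ∨ initMass B C b = 1 := by
  by_cases hex : ∃ d, B.ι d ≠ 0 ∧
      ∀ y : {x // x ∈ C}, ∀ hy : y.1 ∈ InitSet B.edges, d ⟨y, hy⟩ = b y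
  · obtain ⟨d₀, hd₀, hagree⟩ := hex
    right
    rw [initMass, ← B.ι_dist.2]
    refine Finset.sum_congr rfl fun d _ => ?_
    by_cases hd : B.ι d = 0
    · simp [hd]
    · rw [if_pos fun y hy => (agree_of_survivalProb_eq_one B C h hd hd₀ y hy).trans (hagree y hy)]
  · left
    push Not at hex
    refine Finset.sum_eq_zero fun d _ => ?_
    split_ifs with hd
    · by_contra hne
      obtain ⟨y, hy, hneq⟩ := hex d hne
      exact hneq (hd y hy)
    · rfl

end CutsetChain

/-- For any cutset `C`, the Markov chain semantics, the limit
average semantics and the limit semantics induce the same set of full joint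
distributions: `[B]_{MC-C} = [B]_{LimAvg-C} = [B]_{Lim-C}`. -/
theorem stmt6 {V : Type} [Fintype V] [DecidableEq V]
    (B : GBN V) (C : Finset V) (hC : IsCutset B.edges C) :
    MCSem B C = LimAvgSem B C ∧ LimAvgSem B C = LimSem B C := by
  refine ⟨by simp only [MCSem, LimAvgSem, nextSeq_eq_matIter], Set.Subset.antisymm ?_ ?_⟩
  · rintro μ ⟨γ₀, γ, h₀, hcv, rfl⟩
    rw [nextSeq_eq_matIter] at hcv
    obtain ⟨γ₀', h₀', hlim⟩ := exists_isDist_tendsto_matIter_of_tendsto_cesaro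
      (cutsetP_nonneg B C) (sum_cutsetP B C hC) (sum_cutsetP_mul_initMass B C hC)
      (survivalProb_nonneg B C) (survivalProb_le_one B C) (initMass_eq_zero_or_one B C) h₀ hcv
    exact ⟨γ₀', γ, h₀', by rwa [nextSeq_eq_matIter], rfl⟩
  · rintro μ ⟨γ₀, γ, h₀, hlim, rfl⟩
    exact ⟨γ₀, γ, h₀, tendsto_cesaro hlim, rfl⟩

end GBNPaper
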